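/- arXiv:1009.2948 — 2 statements merged into one kernel-verified Lean document; each statement's English description precedes it below -/
import Mathlib

section
/- Let D ⊂ ℝⁿ be a bounded convex domain with R = max_{p ∈ D} r(p). For every r ∈ [0, R], the set E_r = closure of {p ∈ D : r(p) ≥ r} is convex. -/
open scoped RealInnerProductSpace
open Metric MeasureTheory

/-- For a point `p` and a unit vector `v`, the length of the connected component of
`(p + ℝ v) ∩ D` containing `p`, computed as the Lebesgue measure of the corresponding
set of parameters `t` (its connected component containing `0`). -/
noncomputable def segLen {n : ℕ} (D : Set (EuclideanSpace ℝ (Fin n)))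
    (p v : EuclideanSpace ℝ (Fin n)) : ℝ :=
  (volume (connectedComponentIn {t : ℝ | p + t • v ∈ D} 0)).toReal

/-- Inaccessibility of `p` in `D`: the infimum (a minimum, by lower semicontinuity)
of `f_p` over the unit sphere. -/
noncomputable def inacc {n : ℕ} (D : Set (EuclideanSpace ℝ (Fin n)))
    (p : EuclideanSpace ℝ (Fin n)) : ℝ :=
  sInf (segLen D p '' sphere (0 : EuclideanSpace ℝ (Fin n)) 1)

/-- `E_r`: the closure of the set of points of `D` with inaccessibility at least `r`. -/
noncomputable def Eset {n : ℕ} (D : Set (EuclideanSpace ℝ (Fin n))) (r : ℝ) :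
    Set (EuclideanSpace ℝ (Fin n)) :=
  closure {p | p ∈ D ∧ r ≤ inacc D p}

/-- The inaccessibility `R` of `D`: the supremum (for convex `D`, the maximum) of the
inaccessibility function on `D`. -/
noncomputable def Rmax {n : ℕ} (D : Set (EuclideanSpace ℝ (Fin n))) : ℝ :=
  sSup (inacc D '' D)

/-! Fix a unit direction `v` and write `L p = {t | p + t • v ∈ D}`, so that `f_p(v)` is the
length of the interval `L p`. Convexity of `D` gives `a • L p + b • L q ⊆ L (a • p + b • q)`,
and lengths of bounded intervals of `ℝ` add under Minkowski combinations, so each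
`p ↦ f_p(v)` is concave on `D`. Hence the infimum `r` is concave, its superlevel sets are
convex, and so are their closures. -/

open Set Bornology
open scoped Pointwise

theorem Real.toReal_volume_eq_diam_of_isPreconnected {s : Set ℝ} (hs : IsPreconnected s)
    (hb : IsBounded s) : (volume s).toReal = diam s := by
  rcases s.eq_empty_or_nonempty with rfl | hne
  · simp
  suffices volume s = ediam s by rw [this]; rfl
  refine le_antisymm (Real.volume_le_diam s) ?_
  rw [Real.ediam_eq hb, ← Real.volume_Ioo]
  exact measure_mono (IsConnected.Ioo_csInf_csSup_subset ⟨hne, hs⟩ hb.bddBelow hb.bddAbove)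

theorem Real.diam_add {s t : Set ℝ} (hs : IsBounded s) (ht : IsBounded t) (hs₀ : s.Nonempty)
    (ht₀ : t.Nonempty) : diam (s + t) = diam s + diam t := by
  rw [Real.diam_eq (hs.add ht), Real.diam_eq hs, Real.diam_eq ht,
    csSup_add hs₀ hs.bddAbove ht₀ ht.bddAbove, csInf_add hs₀ hs.bddBelow ht₀ ht.bddBelow]
  ring

theorem concaveOn_iInf {E ι : Type*} [AddCommMonoid E] [Module ℝ E] {s : Set E}
    {f : ι → E → ℝ} (hs : Convex ℝ s) (hf : ∀ i, ConcaveOn ℝ s (f i))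
    (hbdd : ∀ x ∈ s, BddBelow (range fun i ↦ f i x)) :
    ConcaveOn ℝ s fun x ↦ ⨅ i, f i x := by
  cases isEmpty_or_nonempty ι
  · simp only [Real.iInf_of_isEmpty]
    exact concaveOn_const _ hs
  refine ⟨hs, fun x hx y hy a b ha hb hab ↦ le_ciInf fun i ↦ ?_⟩
  dsimp only
  calc a • (⨅ i, f i x) + b • (⨅ i, f i y) ≤ a • f i x + b • f i y := by
        gcongr
        · exact ciInf_le (hbdd x hx) i
        · exact ciInf_le (hbdd y hy) i
    _ ≤ f i (a • x + b • y) := (hf i).2 hx hy ha hb hab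

section lineSet

variable {n : ℕ} {D : Set (EuclideanSpace ℝ (Fin n))}

def lineSet (D : Set (EuclideanSpace ℝ (Fin n))) (p v : EuclideanSpace ℝ (Fin n)) : Set ℝ :=
  {t | p + t • v ∈ D}

lemma zero_mem_lineSet {p : EuclideanSpace ℝ (Fin n)} (hp : p ∈ D)
    (v : EuclideanSpace ℝ (Fin n)) : (0 : ℝ) ∈ lineSet D p v := by
  simpa [lineSet] using hp

lemma Bornology.IsBounded.lineSet (hD : IsBounded D) (p : EuclideanSpace ℝ (Fin n))
    {v : EuclideanSpace ℝ (Fin n)} (hv : ‖v‖ = 1) : IsBounded (lineSet D p v) := by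
  refine (AntilipschitzWith.of_le_mul_dist fun t s ↦ ?_).isBounded_preimage hD (K := 1)
  simp [dist_eq_norm, ← sub_smul, norm_smul, hv]

lemma smul_lineSet_add_smul_lineSet_subset (hD : Convex ℝ D) {p q : EuclideanSpace ℝ (Fin n)}
    (v : EuclideanSpace ℝ (Fin n)) {a b : ℝ} (ha : 0 ≤ a) (hb : 0 ≤ b) (hab : a + b = 1) :
    a • lineSet D p v + b • lineSet D q v ⊆ lineSet D (a • p + b • q) v := by
  rintro _ ⟨_, ⟨s, hs, rfl⟩, _, ⟨t, ht, rfl⟩, rfl⟩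
  show a • p + b • q + (a * s + b * t) • v ∈ D
  convert hD hs ht ha hb hab using 1
  module

lemma Convex.lineSet (hD : Convex ℝ D) (p v : EuclideanSpace ℝ (Fin n)) :
    Convex ℝ (lineSet D p v) :=
  convex_iff_pointwise_add_subset.2 fun a b ha hb hab ↦ by
    simpa only [← add_smul, hab, one_smul] using
      smul_lineSet_add_smul_lineSet_subset hD (p := p) (q := p) v ha hb hab

lemma segLen_eq_diam (hD : Convex ℝ D) (hDb : IsBounded D) {p v : EuclideanSpace ℝ (Fin n)}
    (hp : p ∈ D) (hv : ‖v‖ = 1) : segLen D p v = diam (lineSet D p v) := by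
  change (volume (connectedComponentIn (lineSet D p v) 0)).toReal = _
  rw [((hD.lineSet p v).isPreconnected.connectedComponentIn (zero_mem_lineSet hp v))]
  exact Real.toReal_volume_eq_diam_of_isPreconnected (hD.lineSet p v).isPreconnected
    (hDb.lineSet p hv)

lemma concaveOn_segLen (hD : Convex ℝ D) (hDb : IsBounded D) {v : EuclideanSpace ℝ (Fin n)}
    (hv : ‖v‖ = 1) : ConcaveOn ℝ D fun p ↦ segLen D p v := by
  refine ⟨hD, fun p hp q hq a b ha hb hab ↦ ?_⟩
  have hz : a • p + b • q ∈ D := hD hp hq ha hb hab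
  simp only [segLen_eq_diam hD hDb hp hv, segLen_eq_diam hD hDb hq hv,
    segLen_eq_diam hD hDb hz hv, smul_eq_mul]
  calc a * diam (lineSet D p v) + b * diam (lineSet D q v)
      = diam (a • lineSet D p v + b • lineSet D q v) := by
        rw [Real.diam_add ((hDb.lineSet p hv).smul₀ a) ((hDb.lineSet q hv).smul₀ b)
          (nonempty_of_mem (zero_mem_lineSet hp v)).smul_set
          (nonempty_of_mem (zero_mem_lineSet hq v)).smul_set,
          diam_smul₀, diam_smul₀, Real.norm_of_nonneg ha, Real.norm_of_nonneg hb]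
    _ ≤ diam (lineSet D (a • p + b • q) v) :=
        diam_mono (smul_lineSet_add_smul_lineSet_subset hD v ha hb hab) (hDb.lineSet _ hv)

lemma concaveOn_inacc (hD : Convex ℝ D) (hDb : IsBounded D) : ConcaveOn ℝ D (inacc D) := by
  have hinacc : inacc D = fun p ↦ ⨅ v : sphere (0 : EuclideanSpace ℝ (Fin n)) 1, segLen D p v :=
    funext fun p ↦ sInf_image'
  rw [hinacc]
  refine concaveOn_iInf hD (fun v ↦ concaveOn_segLen hD hDb (by simp)) fun p _ ↦ ?_
  exact ⟨0, by rintro _ ⟨v, rfl⟩; exact ENNReal.toReal_nonneg⟩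

end lineSet

theorem Eset_convex_general {n : ℕ} (D : Set (EuclideanSpace ℝ (Fin n)))
    (hBdd : Bornology.IsBounded D)
    (hConv : Convex ℝ D) :
    ∀ r ∈ Set.Icc (0 : ℝ) (Rmax D), Convex ℝ (Eset D r) := by
  intro r _
  exact ((concaveOn_inacc hConv hBdd).convex_ge r).closure

/-- for a bounded convex domain `D ⊂ ℝⁿ` with `R = max r`, the set
`E_r = closure {p ∈ D | r(p) ≥ r}` is convex for every `r ∈ [0, R]`. -/
theorem Eset_convex {n : ℕ} (D : Set (EuclideanSpace ℝ (Fin n)))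
    (hOpen : IsOpen D) (hNe : D.Nonempty) (hBdd : Bornology.IsBounded D)
    (hConv : Convex ℝ D) :
    ∀ r ∈ Set.Icc (0 : ℝ) (Rmax D), Convex ℝ (Eset D r) :=
  Eset_convex_general D hBdd hConv
end

section
/- Let D ⊂ ℝⁿ be a bounded strictly convex domain with R = max_{p ∈ D} r(p). Then the set I_D of points of maximum inaccessibility is either a single point or a nondegenerate closed segment. -/
open scoped RealInnerProductSpace
open Metric MeasureTheory

/-- `I_D = ⋂_{r < R} E_r`, the set of points of maximum inaccessibility. -/
noncomputable def maxInaccSet {n : ℕ} (D : Set (EuclideanSpace ℝ (Fin n))) :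
    Set (EuclideanSpace ℝ (Fin n)) :=
  ⋂ r ∈ Set.Iio (Rmax D), Eset D r

/-!
The chord length `segLen D · v` is concave on `D`: the upper end of the chord is a concave and
the lower end a convex function of the base point. Hence `inacc D` is concave, so `I_D` is a
nonempty compact convex set, and `inacc D` is continuous on `D`, so `inacc D = R` on `I_D ∩ D`.

For `n ≥ 2`, `I_D ⊆ D`: near a point of `I_D ∩ ∂D` there are chords of length at least `R / 2`
parallel to a supporting hyperplane at that point, and they would leave a segment in `∂D`.

If `I_D` contained a nondegenerate triangle, let `p` be its centroid and `v` a direction of minimal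
chord at `p`. Among points of `I_D` the chord in direction `v` is shortest at `p`, so along each
median through `p` the lower chord end moves affinely; it stays in `∂D`, so by strict convexity
it is constant, i.e. each vertex differs from `p` by a multiple of `v`. Thus `I_D` lies on a
line, and a compact convex subset of a line is a point or a segment.
-/

open Set Bornology Topology

section NormedSpace

variable {E : Type*} [NormedAddCommGroup E] [NormedSpace ℝ E] {D : Set E} {a b p v x z : E}

theorem openSegment_subset_of_mem_closure (hO : IsOpen D) (hC : Convex ℝ D)
    (hStrict : ∀ x ∈ frontier D, ∀ y ∈ frontier D, segment ℝ x y ⊆ frontier D → x = y)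
    (ha : a ∈ closure D) (hb : b ∈ closure D) (hab : a ≠ b) : openSegment ℝ a b ⊆ D := by
  intro c hc
  by_contra hcD
  obtain ⟨φ, hφ⟩ := geometric_hahn_banach_open_point hC hO hcD
  have hle : closure D ⊆ {y | φ y ≤ φ c} :=
    closure_minimal (fun y hy => (hφ y hy).le) (isClosed_le φ.continuous continuous_const)
  have hφa := hle ha
  have hφb := hle hb
  obtain ⟨s, t, hs, ht, hst, rfl⟩ := hc
  simp only [mem_ofPred_eq, map_add, map_smul, smul_eq_mul] at hφa hφb
  obtain rfl : s = 1 - t := by linarith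
  -- `φ c` is a proper average of `φ a, φ b ≤ φ c`, so the whole segment lies on the hyperplane
  have hseg : segment ℝ a b ⊆ {y | φ y = φ ((1 - t) • a + t • b)} :=
    (convex_hyperplane φ.isLinear _).segment_subset (by simp; nlinarith) (by simp; nlinarith)
  refine hab (hStrict a ?_ b ?_ fun y hy => ?_)
  all_goals rw [hO.frontier_eq]
  · exact ⟨ha, fun h => (hφ a h).ne (by simpa using hseg (left_mem_segment ℝ a b))⟩
  · exact ⟨hb, fun h => (hφ b h).ne (by simpa using hseg (right_mem_segment ℝ a b))⟩
  · exact ⟨hC.closure.segment_subset ha hb hy, fun h => (hφ y h).ne (by simpa using hseg hy)⟩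

theorem exists_norm_eq_one_apply_eq_zero [FiniteDimensional ℝ E]
    (hE : 2 ≤ Module.finrank ℝ E) (φ : E →L[ℝ] ℝ) : ∃ u : E, ‖u‖ = 1 ∧ φ u = 0 := by
  have hker : LinearMap.ker (φ : E →ₗ[ℝ] ℝ) ≠ ⊥ :=
    LinearMap.ker_ne_bot_of_finrank_lt (by rw [Module.finrank_self]; omega)
  obtain ⟨u, hu, hu0⟩ := Submodule.exists_mem_ne_zero_of_ne_bot hker
  exact ⟨‖u‖⁻¹ • u, norm_smul_inv_norm hu0, by simpa using Or.inr hu⟩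

theorem exists_eq_segment_of_subset_line {S : Set E} (hSc : IsCompact S) (hSconv : Convex ℝ S)
    (hne : S.Nonempty) {u w : E} (huw : u ≠ w) (hSl : S ⊆ line[ℝ, u, w]) :
    ∃ P Q, S = segment ℝ P Q := by
  set f : ℝ →ᵃ[ℝ] E := AffineMap.lineMap u w
  set K := f ⁻¹' S
  have hfK : f '' K = S := image_preimage_eq_of_subset fun y hy => by
    simpa using (mem_affineSpan_pair_iff_exists_lineMap_eq.1 (hSl hy))
  have hf : AntilipschitzWith (nndist u w)⁻¹ f := AntilipschitzWith.of_le_mul_dist fun s t => by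
    rw [dist_lineMap_lineMap, NNReal.coe_inv, coe_nndist, mul_comm (dist s t),
      inv_mul_cancel_left₀ (dist_ne_zero.2 huw)]
  have hK : IsCompact K := isCompact_of_isClosed_isBounded
    (hSc.isClosed.preimage (AffineMap.lineMap_continuous)) (hf.isBounded_preimage hSc.isBounded)
  have hKne : K.Nonempty := by rw [← image_nonempty, hfK]; exact hne
  rw [eq_Icc_csInf_csSup_of_connected_bdd_closed ⟨hKne, (hSconv.affine_preimage f).isPreconnected⟩
    hK.bddBelow hK.bddAbove hK.isClosed, ← segment_eq_Icc (csInf_le_csSup hKne hK.bddBelow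
    hK.bddAbove), image_segment] at hfK
  exact ⟨_, _, hfK.symm⟩

def chord (D : Set E) (p v : E) : Set ℝ :=
  {t | p + t • v ∈ D}

theorem zero_mem_chord (hp : p ∈ D) : (0 : ℝ) ∈ chord D p v := by
  simpa [chord] using hp

theorem smul_add_smul_mem_chord (hC : Convex ℝ D) {s t a b : ℝ} (hs : s ∈ chord D x v)
    (ht : t ∈ chord D z v) (ha : 0 ≤ a) (hb : 0 ≤ b) (hab : a + b = 1) :
    a * s + b * t ∈ chord D (a • x + b • z) v := by
  have h := hC hs ht ha hb hab
  simp only [chord, mem_ofPred_eq]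
  convert h using 1
  module

theorem convex_chord (hC : Convex ℝ D) : Convex ℝ (chord D p v) := fun s hs t ht a b ha hb hab => by
  simpa [Convex.combo_self hab] using smul_add_smul_mem_chord hC hs ht ha hb hab

theorem isOpen_chord (hO : IsOpen D) : IsOpen (chord D p v) :=
  hO.preimage (by fun_prop)

theorem chord_neg : chord D p (-v) = -chord D p v := by
  ext t
  simp [chord]

theorem isometry_add_smul (p : E) (hv : ‖v‖ = 1) : Isometry fun t : ℝ => p + t • v :=
  Isometry.of_dist_eq fun s t => by
    rw [dist_add_left, dist_eq_norm, ← sub_smul, norm_smul, hv, mul_one, Real.dist_eq,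
      Real.norm_eq_abs]

theorem isBounded_chord (hB : IsBounded D) (hv : ‖v‖ = 1) : IsBounded (chord D p v) :=
  (isometry_add_smul p hv).antilipschitz.isBounded_preimage hB

theorem diam_chord_le (hB : IsBounded D) (hv : ‖v‖ = 1) :
    diam (chord D p v) ≤ diam D := by
  rw [← (isometry_add_smul p hv).diam_image]
  exact diam_mono (image_preimage_subset _ _) hB


theorem chord_eq_Ioo (hO : IsOpen D) (hC : Convex ℝ D) (hB : IsBounded D) (hv : ‖v‖ = 1)
    (hp : p ∈ D) :
    chord D p v = Ioo (sInf (chord D p v)) (sSup (chord D p v)) := by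
  have hbdd := isBounded_chord (p := p) hB hv
  refine Subset.antisymm (fun t ht => ?_) ((IsConnected.Ioo_csInf_csSup_subset
    ⟨⟨0, zero_mem_chord hp⟩, (convex_chord hC).isPreconnected⟩ hbdd.bddBelow hbdd.bddAbove))
  obtain ⟨ε, hε, hball⟩ := Metric.isOpen_iff.1 (isOpen_chord hO) t ht
  have hlo : t - ε / 2 ∈ chord D p v := hball (by rw [Real.ball_eq_Ioo]; constructor <;> linarith)
  have hhi : t + ε / 2 ∈ chord D p v := hball (by rw [Real.ball_eq_Ioo]; constructor <;> linarith)
  exact ⟨(csInf_le hbdd.bddBelow hlo).trans_lt (by linarith),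
    (le_csSup hbdd.bddAbove hhi).trans_lt' (by linarith)⟩

theorem zero_mem_Ioo_chord (hO : IsOpen D) (hC : Convex ℝ D) (hB : IsBounded D)
    (hv : ‖v‖ = 1) (hp : p ∈ D) : (0 : ℝ) ∈ Ioo (sInf (chord D p v)) (sSup (chord D p v)) :=
  chord_eq_Ioo hO hC hB hv hp ▸ zero_mem_chord hp

theorem add_smul_mem_closure (hO : IsOpen D) (hC : Convex ℝ D) (hB : IsBounded D)
    (hv : ‖v‖ = 1) (hp : p ∈ D) {t : ℝ}
    (ht : t ∈ Icc (sInf (chord D p v)) (sSup (chord D p v))) : p + t • v ∈ closure D := by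
  have h0 := zero_mem_Ioo_chord hO hC hB hv hp
  rw [← closure_Ioo (h0.1.trans h0.2).ne, ← chord_eq_Ioo hO hC hB hv hp] at ht
  exact map_mem_closure (f := fun s : ℝ => p + s • v) (by fun_prop) ht fun s hs => hs

theorem add_sInf_chord_smul_notMem (hO : IsOpen D) (hC : Convex ℝ D) (hB : IsBounded D)
    (hv : ‖v‖ = 1) (hp : p ∈ D) : p + sInf (chord D p v) • v ∉ D := fun h =>
  ((chord_eq_Ioo hO hC hB hv hp).subset (show sInf (chord D p v) ∈ chord D p v from h)).1.ne rfl

theorem concaveOn_sSup_chord (hC : Convex ℝ D) (hB : IsBounded D) (hv : ‖v‖ = 1) :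
    ConcaveOn ℝ D fun p => sSup (chord D p v) := by
  refine ⟨hC, fun x hx z hz a b ha hb hab => le_of_forall_pos_le_add fun ε hε => ?_⟩
  obtain ⟨s, hs, hs'⟩ := exists_lt_of_lt_csSup ⟨0, zero_mem_chord (v := v) hx⟩ (sub_lt_self _ hε)
  obtain ⟨t, ht, ht'⟩ := exists_lt_of_lt_csSup ⟨0, zero_mem_chord (v := v) hz⟩ (sub_lt_self _ hε)
  have h := le_csSup (isBounded_chord hB hv).bddAbove (smul_add_smul_mem_chord hC hs ht ha hb hab)
  have h₁ := mul_le_mul_of_nonneg_left (sub_lt_iff_lt_add.1 hs').le ha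
  have h₂ := mul_le_mul_of_nonneg_left (sub_lt_iff_lt_add.1 ht').le hb
  simp only [smul_eq_mul]
  nlinarith

theorem convexOn_sInf_chord (hC : Convex ℝ D) (hB : IsBounded D) (hv : ‖v‖ = 1) :
    ConvexOn ℝ D fun p => sInf (chord D p v) :=
  (concaveOn_sSup_chord hC hB (v := -v) (by rwa [norm_neg])).neg.congr fun p _ => by
    rw [Real.sInf_def, ← chord_neg, Pi.neg_apply]

end NormedSpace

section Euclidean

variable {n : ℕ} {D : Set (EuclideanSpace ℝ (Fin n))} {p v x z : EuclideanSpace ℝ (Fin n)}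

theorem nonempty_sphere_of_pos (hn : 0 < n) :
    (sphere (0 : EuclideanSpace ℝ (Fin n)) 1).Nonempty :=
  ⟨EuclideanSpace.single ⟨0, hn⟩ 1, by simp⟩

theorem segLen_nonneg : 0 ≤ segLen D p v := ENNReal.toReal_nonneg

theorem segLen_eq (hO : IsOpen D) (hC : Convex ℝ D) (hB : IsBounded D) (hv : ‖v‖ = 1)
    (hp : p ∈ D) : segLen D p v = sSup (chord D p v) - sInf (chord D p v) := by
  have h0 := zero_mem_Ioo_chord hO hC hB hv hp
  change (volume (connectedComponentIn (chord D p v) 0)).toReal = _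
  rw [(convex_chord hC).isPreconnected.connectedComponentIn (zero_mem_chord hp)]
  conv_lhs => rw [chord_eq_Ioo hO hC hB hv hp]
  rw [Real.volume_Ioo, ENNReal.toReal_ofReal (by linarith [h0.1, h0.2])]

theorem sub_le_segLen (hO : IsOpen D) (hC : Convex ℝ D) (hB : IsBounded D) (hv : ‖v‖ = 1)
    (hp : p ∈ D) {s t : ℝ} (hs : s ∈ chord D p v) (ht : t ∈ chord D p v) :
    t - s ≤ segLen D p v := by
  rw [segLen_eq hO hC hB hv hp]
  exact sub_le_sub (le_csSup (isBounded_chord hB hv).bddAbove ht)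
    (csInf_le (isBounded_chord hB hv).bddBelow hs)

theorem segLen_le_diam (hO : IsOpen D) (hC : Convex ℝ D) (hB : IsBounded D) (hv : ‖v‖ = 1)
    (hp : p ∈ D) : segLen D p v ≤ diam D := by
  rw [segLen_eq hO hC hB hv hp, ← Real.diam_eq (isBounded_chord hB hv)]
  exact diam_chord_le hB hv

theorem le_segLen_of_ball_subset (hO : IsOpen D) (hC : Convex ℝ D) (hB : IsBounded D)
    (hv : ‖v‖ = 1) {ε : ℝ} (hε : 0 < ε) (hball : ball p ε ⊆ D) : ε ≤ segLen D p v := by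
  have hmem : ∀ t : ℝ, |t| < ε → t ∈ chord D p v := fun t ht =>
    hball (by simpa [mem_ball_iff_norm, norm_smul, hv] using ht)
  have h := sub_le_segLen hO hC hB hv (hball (mem_ball_self hε))
    (hmem (-(ε / 2)) (by rw [abs_neg, abs_of_pos (half_pos hε)]; linarith))
    (hmem (ε / 2) (by rw [abs_of_pos (half_pos hε)]; linarith))
  linarith

theorem concaveOn_segLen_s18 (hO : IsOpen D) (hC : Convex ℝ D) (hB : IsBounded D) (hv : ‖v‖ = 1) :
    ConcaveOn ℝ D fun p => segLen D p v :=
  ((concaveOn_sSup_chord hC hB hv).sub (convexOn_sInf_chord hC hB hv)).congr fun _ hp =>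
    (segLen_eq hO hC hB hv hp).symm

theorem lowerSemicontinuousOn_segLen (hO : IsOpen D) (hC : Convex ℝ D) (hB : IsBounded D)
    (hp : p ∈ D) : LowerSemicontinuousOn (segLen D p) (sphere 0 1) := by
  intro w hw c hc
  have hw1 : ‖w‖ = 1 := by simpa using hw
  rw [segLen_eq hO hC hB hw1 hp] at hc
  obtain ⟨s, hs, t, ht, hst⟩ : ∃ s ∈ chord D p w, ∃ t ∈ chord D p w, c < t - s := by
    have h0 := zero_mem_Ioo_chord hO hC hB hw1 hp
    have hmax : max c 0 < sSup (chord D p w) - sInf (chord D p w) :=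
      max_lt hc (by linarith [h0.1, h0.2])
    set δ := (sSup (chord D p w) - sInf (chord D p w) - max c 0) / 3 with hδ
    have hδ0 : 0 < δ := by linarith
    rw [chord_eq_Ioo hO hC hB hw1 hp]
    exact ⟨sInf (chord D p w) + δ, ⟨by linarith, by linarith [le_max_right c 0]⟩,
      sSup (chord D p w) - δ, ⟨by linarith [le_max_right c 0], by linarith⟩,
      by linarith [le_max_left c 0]⟩
  have hnear : ∀ τ ∈ chord D p w, ∀ᶠ u in 𝓝[sphere 0 1] w, τ ∈ chord D p u :=
    fun τ hτ => nhdsWithin_le_nhds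
      ((continuous_const.add (continuous_const_smul τ)).continuousAt.eventually_mem
        (hO.mem_nhds hτ))
  filter_upwards [self_mem_nhdsWithin, hnear s hs, hnear t ht] with u hu hsu htu
  exact hst.trans_le (sub_le_segLen hO hC hB (by simpa using hu) hp hsu htu)

theorem inacc_le_segLen (hv : v ∈ sphere 0 1) : inacc D p ≤ segLen D p v :=
  csInf_le ⟨0, forall_mem_image.2 fun _ _ => segLen_nonneg⟩ (mem_image_of_mem _ hv)

theorem exists_segLen_eq_inacc (hO : IsOpen D) (hC : Convex ℝ D) (hB : IsBounded D)
    (hp : p ∈ D) (hn : 0 < n) : ∃ v ∈ sphere 0 1, segLen D p v = inacc D p := by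
  obtain ⟨v, hv, hmin⟩ := (lowerSemicontinuousOn_segLen hO hC hB hp).exists_isMinOn
    (nonempty_sphere_of_pos hn) (isCompact_sphere 0 1)
  exact ⟨v, hv, (IsLeast.csInf_eq
    ⟨mem_image_of_mem _ hv, forall_mem_image.2 (isMinOn_iff.1 hmin)⟩).symm⟩

theorem inacc_le_diam (hO : IsOpen D) (hC : Convex ℝ D) (hB : IsBounded D) (hp : p ∈ D) :
    inacc D p ≤ diam D := by
  rcases (sphere (0 : EuclideanSpace ℝ (Fin n)) 1).eq_empty_or_nonempty with h | ⟨v, hv⟩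
  · simp [inacc, h, diam_nonneg]
  · exact (inacc_le_segLen hv).trans (segLen_le_diam hO hC hB (by simpa using hv) hp)

theorem le_inacc_of_ball_subset (hO : IsOpen D) (hC : Convex ℝ D) (hB : IsBounded D)
    (hn : 0 < n) {ε : ℝ} (hε : 0 < ε) (hball : ball p ε ⊆ D) : ε ≤ inacc D p :=
  le_csInf ((nonempty_sphere_of_pos hn).image _) <| forall_mem_image.2 fun _ hv =>
    le_segLen_of_ball_subset hO hC hB (by simpa using hv) hε hball

theorem concaveOn_inacc_s18 (hO : IsOpen D) (hC : Convex ℝ D) (hB : IsBounded D) :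
    ConcaveOn ℝ D (inacc D) := by
  refine ⟨hC, fun x hx z hz a b ha hb hab => ?_⟩
  rcases (sphere (0 : EuclideanSpace ℝ (Fin n)) 1).eq_empty_or_nonempty with h | h
  · simp [inacc, h]
  refine le_csInf (h.image _) (forall_mem_image.2 fun v hv => ?_)
  calc a • inacc D x + b • inacc D z ≤ a • segLen D x v + b • segLen D z v := by
        gcongr <;> exact inacc_le_segLen hv
    _ ≤ segLen D (a • x + b • z) v :=
        (concaveOn_segLen_s18 hO hC hB (by simpa using hv)).2 hx hz ha hb hab

end Euclidean

section MaxInaccSet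

variable {n : ℕ} {D : Set (EuclideanSpace ℝ (Fin n))} {p u v w x z : EuclideanSpace ℝ (Fin n)}
  {r : ℝ}

theorem inacc_le_Rmax (hO : IsOpen D) (hC : Convex ℝ D) (hB : IsBounded D) (hp : p ∈ D) :
    inacc D p ≤ Rmax D :=
  le_csSup ⟨diam D, forall_mem_image.2 fun _ hq => inacc_le_diam hO hC hB hq⟩
    (mem_image_of_mem _ hp)

theorem Rmax_pos (hO : IsOpen D) (hC : Convex ℝ D) (hB : IsBounded D) (hNe : D.Nonempty)
    (hn : 0 < n) : 0 < Rmax D := by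
  obtain ⟨q, hq⟩ := hNe
  obtain ⟨ε, hε, hball⟩ := Metric.isOpen_iff.1 hO q hq
  exact hε.trans_le
    ((le_inacc_of_ball_subset hO hC hB hn hε hball).trans (inacc_le_Rmax hO hC hB hq))

theorem Eset_antitone : Antitone (Eset D) :=
  fun _ _ hrr' => closure_mono fun _ hq => ⟨hq.1, hrr'.trans hq.2⟩

theorem Eset_subset_closure : Eset D r ⊆ closure D :=
  closure_mono fun _ hq => hq.1

theorem maxInaccSet_subset_Eset (hr : r < Rmax D) : maxInaccSet D ⊆ Eset D r :=
  biInter_subset_of_mem hr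

theorem isCompact_Eset (hB : IsBounded D) : IsCompact (Eset D r) :=
  isCompact_of_isClosed_isBounded isClosed_closure (hB.closure.subset Eset_subset_closure)

theorem isCompact_maxInaccSet (hB : IsBounded D) : IsCompact (maxInaccSet D) :=
  (isCompact_Eset hB).of_isClosed_subset (isClosed_biInter fun _ _ => isClosed_closure)
    (maxInaccSet_subset_Eset (sub_one_lt (Rmax D)))

theorem convex_maxInaccSet (hO : IsOpen D) (hC : Convex ℝ D) (hB : IsBounded D) :
    Convex ℝ (maxInaccSet D) :=
  convex_iInter₂ fun r _ => ((concaveOn_inacc_s18 hO hC hB).convex_ge r).closure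

theorem maxInaccSet_nonempty (hB : IsBounded D) (hNe : D.Nonempty) :
    (maxInaccSet D).Nonempty := by
  rw [maxInaccSet, biInter_eq_iInter]
  have : Nonempty (Iio (Rmax D)) := ⟨⟨Rmax D - 1, mem_Iio.2 (sub_one_lt _)⟩⟩
  refine IsCompact.nonempty_iInter_of_directed_nonempty_isCompact_isClosed _
    (Eset_antitone.comp_monotone (Subtype.mono_coe _)).directed_ge (fun r => ?_)
    (fun _ => isCompact_Eset hB) fun _ => isClosed_closure
  obtain ⟨_, ⟨q, hq, rfl⟩, hlt⟩ := exists_lt_of_lt_csSup (hNe.image (inacc D)) r.2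
  exact ⟨q, subset_closure ⟨hq, hlt.le⟩⟩

theorem inacc_eq_Rmax (hO : IsOpen D) (hC : Convex ℝ D) (hB : IsBounded D)
    (hI : p ∈ maxInaccSet D) (hp : p ∈ D) : inacc D p = Rmax D := by
  refine (inacc_le_Rmax hO hC hB hp).antisymm (le_of_forall_lt_imp_le_of_dense fun r hr => ?_)
  exact ContinuousWithinAt.closure_le (maxInaccSet_subset_Eset hr hI) continuousWithinAt_const
    (((concaveOn_inacc_s18 hO hC hB).continuousOn hO p hp).mono fun _ hq => hq.1) fun _ hq => hq.2

theorem add_smul_mem_closure_of_mem_Eset (hO : IsOpen D) (hC : Convex ℝ D) (hB : IsBounded D)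
    (hv : v ∈ sphere 0 1) (hr : 0 ≤ r) (hx : x ∈ Eset D r) :
    x + (r / 2) • v ∈ closure D ∨ x + (-(r / 2)) • v ∈ closure D := by
  have hv1 : ‖v‖ = 1 := by simpa using hv
  have hclosed : IsClosed {x | x + (r / 2) • v ∈ closure D ∨ x + (-(r / 2)) • v ∈ closure D} :=
    (isClosed_closure.preimage (by fun_prop : Continuous fun x => x + (r / 2) • v)).union
      (isClosed_closure.preimage (by fun_prop : Continuous fun x => x + (-(r / 2)) • v))
  refine closure_minimal ?_ hclosed hx
  rintro q ⟨hq, hrq⟩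
  have h0 := zero_mem_Ioo_chord hO hC hB hv1 hq
  have hlen : r ≤ sSup (chord D q v) - sInf (chord D q v) :=
    segLen_eq hO hC hB hv1 hq ▸ hrq.trans (inacc_le_segLen hv)
  by_cases h : r / 2 ≤ sSup (chord D q v)
  · exact Or.inl (add_smul_mem_closure hO hC hB hv1 hq ⟨by linarith [h0.1], h⟩)
  · exact Or.inr (add_smul_mem_closure hO hC hB hv1 hq ⟨by linarith, by linarith [h0.2]⟩)

theorem maxInaccSet_subset_of_two_le (hO : IsOpen D) (hC : Convex ℝ D) (hB : IsBounded D)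
    (hNe : D.Nonempty)
    (hStrict : ∀ x ∈ frontier D, ∀ y ∈ frontier D, segment ℝ x y ⊆ frontier D → x = y)
    (hn : 2 ≤ n) : maxInaccSet D ⊆ D := by
  intro x hx
  by_contra hxD
  obtain ⟨φ, hφ⟩ := geometric_hahn_banach_open_point hC hO hxD
  obtain ⟨u, hu, hφu⟩ := exists_norm_eq_one_apply_eq_zero (by rwa [finrank_euclideanSpace_fin]) φ
  -- `u` is tangent to the supporting hyperplane at `x`, so the line `x + ℝ u` misses `D`
  have hline : ∀ t : ℝ, x + t • u ∉ D := fun t h => by simpa [hφu] using hφ _ h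
  have hR := Rmax_pos hO hC hB hNe (by omega)
  have hxE := maxInaccSet_subset_Eset (half_lt_self hR) hx
  obtain ⟨t, ht0, ht⟩ : ∃ t : ℝ, t ≠ 0 ∧ x + t • u ∈ closure D := by
    rcases add_smul_mem_closure_of_mem_Eset hO hC hB (by simpa using hu) (half_pos hR).le hxE with
      h | h
    · exact ⟨_, by positivity, h⟩
    · exact ⟨_, by simp [hR.ne'], h⟩
  have hmid := openSegment_subset_of_mem_closure hO hC hStrict (Eset_subset_closure hxE) ht
    (by simp [ht0, ← norm_ne_zero_iff, hu]) ⟨2⁻¹, 2⁻¹, by norm_num, by norm_num, by norm_num, rfl⟩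
  exact hline (t / 2) (by convert hmid using 1; module)

theorem sub_mem_span_of_mem_openSegment (hO : IsOpen D) (hC : Convex ℝ D) (hB : IsBounded D)
    (hStrict : ∀ x ∈ frontier D, ∀ y ∈ frontier D, segment ℝ x y ⊆ frontier D → x = y)
    (hv : ‖v‖ = 1) (hx : x ∈ D) (hz : z ∈ D) (hp : p ∈ openSegment ℝ x z)
    (hpx : segLen D p v ≤ segLen D x v) (hpz : segLen D p v ≤ segLen D z v) :
    x - z ∈ ℝ ∙ v := by
  obtain ⟨a, b, ha, hb, hab, rfl⟩ := hp
  have hpD := hC hx hz ha.le hb.le hab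
  have hlo := (convexOn_sInf_chord hC hB hv).2 hx hz ha.le hb.le hab
  have hhi := (concaveOn_sSup_chord hC hB hv).2 hx hz ha.le hb.le hab
  rw [segLen_eq hO hC hB hv hpD, segLen_eq hO hC hB hv hx] at hpx
  rw [segLen_eq hO hC hB hv hpD, segLen_eq hO hC hB hv hz] at hpz
  simp only [smul_eq_mul] at hlo hhi
  -- the concave `sSup` minus the convex `sInf` is minimal at an interior point of the segment,
  -- which forces `sInf` to be affine there
  have hlo_eq : sInf (chord D (a • x + b • z) v) =
      a * sInf (chord D x v) + b * sInf (chord D z v) := by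
    have := mul_le_mul_of_nonneg_left hpx ha.le
    have := mul_le_mul_of_nonneg_left hpz hb.le
    have : (a + b) * sInf (chord D (a • x + b • z) v) = sInf (chord D (a • x + b • z) v) := by
      rw [hab, one_mul]
    have : (a + b) * sSup (chord D (a • x + b • z) v) = sSup (chord D (a • x + b • z) v) := by
      rw [hab, one_mul]
    linarith
  have hend : ∀ y ∈ D, y + sInf (chord D y v) • v ∈ closure D := fun y hy =>
    have h0 := zero_mem_Ioo_chord hO hC hB hv hy
    add_smul_mem_closure hO hC hB hv hy ⟨le_rfl, (h0.1.trans h0.2).le⟩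
  by_contra hxz
  refine add_sInf_chord_smul_notMem hO hC hB hv hpD (openSegment_subset_of_mem_closure hO hC
    hStrict (hend x hx) (hend z hz) (fun h => hxz ?_) ⟨a, b, ha, hb, hab, ?_⟩)
  · exact Submodule.mem_span_singleton.2
      ⟨sInf (chord D z v) - sInf (chord D x v), by linear_combination (norm := module) -h⟩
  · rw [hlo_eq]
    module

theorem collinear_of_mem_maxInaccSet (hO : IsOpen D) (hC : Convex ℝ D) (hB : IsBounded D)
    (hNe : D.Nonempty)
    (hStrict : ∀ x ∈ frontier D, ∀ y ∈ frontier D, segment ℝ x y ⊆ frontier D → x = y)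
    (hu : u ∈ maxInaccSet D) (hw : w ∈ maxInaccSet D) (hz : z ∈ maxInaccSet D) :
    Collinear ℝ ({u, w, z} : Set (EuclideanSpace ℝ (Fin n))) := by
  rcases le_or_gt n 1 with hn | hn
  · exact collinear_iff_finrank_le_one.2
      ((Submodule.finrank_le _).trans (by rwa [finrank_euclideanSpace_fin]))
  have hID := maxInaccSet_subset_of_two_le hO hC hB hNe hStrict hn
  have hIc := convex_maxInaccSet hO hC hB
  have hmid : ∀ {y y'}, y ∈ maxInaccSet D → y' ∈ maxInaccSet D →
      (2⁻¹ : ℝ) • y + (2⁻¹ : ℝ) • y' ∈ maxInaccSet D :=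
    fun hy hy' => hIc hy hy' (by norm_num) (by norm_num) (by norm_num)
  set p := (3⁻¹ : ℝ) • u + (3⁻¹ : ℝ) • w + (3⁻¹ : ℝ) • z with hp_def
  have hp : p ∈ maxInaccSet D := by
    convert hIc hu (hmid hw hz) (a := 3⁻¹) (b := 2 / 3) (by norm_num) (by norm_num) (by norm_num)
      using 1
    module
  obtain ⟨v, hv, hpv⟩ := exists_segLen_eq_inacc hO hC hB (hID hp) (by omega)
  have hmin : ∀ y ∈ maxInaccSet D, segLen D p v ≤ segLen D y v := fun y hy => by
    rw [hpv, inacc_eq_Rmax hO hC hB hp (hID hp), ← inacc_eq_Rmax hO hC hB hy (hID hy)]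
    exact inacc_le_segLen hv
  have key : ∀ {x y y'}, x ∈ maxInaccSet D → y ∈ maxInaccSet D → y' ∈ maxInaccSet D →
      (3⁻¹ : ℝ) • x + (3⁻¹ : ℝ) • y + (3⁻¹ : ℝ) • y' = p → ∃ r : ℝ, x = r • v +ᵥ p := by
    intro x y y' hx hy hy' hxp
    have hm := hmid hy hy'
    obtain ⟨r, hr⟩ := Submodule.mem_span_singleton.1 (sub_mem_span_of_mem_openSegment hO hC hB
      hStrict (by simpa using hv) (hID hx) (hID hm)
      ⟨3⁻¹, 2 / 3, by norm_num, by norm_num, by norm_num, by rw [← hxp]; module⟩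
      (hmin x hx) (hmin _ hm))
    exact ⟨2 / 3 * r, by rw [vadd_eq_add, mul_smul, hr, ← hxp]; module⟩
  rw [collinear_iff_exists_forall_eq_smul_vadd]
  refine ⟨p, v, ?_⟩
  simp only [mem_insert_iff, mem_singleton_iff, forall_eq_or_imp, forall_eq]
  exact ⟨key hu hw hz rfl, key hw hz hu (by rw [hp_def]; module),
    key hz hu hw (by rw [hp_def]; module)⟩

end MaxInaccSet

/-- for a bounded strictly convex domain `D ⊂ ℝⁿ`, the set `I_D` of
points of maximum inaccessibility is either a single point or a nondegenerate closed
segment. -/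
theorem maxInaccSet_point_or_segment {n : ℕ} (D : Set (EuclideanSpace ℝ (Fin n)))
    (hOpen : IsOpen D) (hNe : D.Nonempty) (hBdd : Bornology.IsBounded D)
    (hConv : Convex ℝ D)
    (hStrict : ∀ x ∈ frontier D, ∀ y ∈ frontier D, segment ℝ x y ⊆ frontier D → x = y) :
    (∃ p : EuclideanSpace ℝ (Fin n), maxInaccSet D = {p}) ∨
    (∃ P Q : EuclideanSpace ℝ (Fin n), P ≠ Q ∧ maxInaccSet D = segment ℝ P Q) := by
  rcases (maxInaccSet_nonempty hBdd hNe).exists_eq_singleton_or_nontrivial with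
    h | ⟨u, hu, w, hw, huw⟩
  · exact Or.inl h
  have hline : maxInaccSet D ⊆ line[ℝ, u, w] := fun z hz =>
    (collinear_of_mem_maxInaccSet hOpen hConv hBdd hNe hStrict hu hw hz).mem_affineSpan_of_mem_of_ne
      (by simp) (by simp) (by simp) huw
  obtain ⟨P, Q, hPQ⟩ := exists_eq_segment_of_subset_line (isCompact_maxInaccSet hBdd)
    (convex_maxInaccSet hOpen hConv hBdd) ⟨u, hu⟩ huw hline
  refine Or.inr ⟨P, Q, fun h => huw ?_, hPQ⟩
  rw [hPQ, h, segment_same, mem_singleton_iff] at hu hw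
  exact hu.trans hw.symm
end
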